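/- (Leak criterion.) Let ℐ be a family of subsets of {1,…,N}, and let I, J ⊆ {1,…,N} be disjoint. Then the restriction of Λ_ℐ over the relatively open face relint(−τ_I + τ_J) differs from the restriction of the full skeleton Λ_full, i.e. Λ_ℐ ∩ (relint(−τ_I+τ_J) × ℝ^N) ≠ Λ_full ∩ (relint(−τ_I+τ_J) × ℝ^N), if and only if I ∪ J' ∉ ℐ for every J' ⊆ J. -/

import Mathlib

open Pointwise

/-- The partial conormal Lagrangian `Λ_I`. -/
def LambdaI {N : ℕ} (I : Set (Fin N)) : Set ((Fin N → ℝ) × (Fin N → ℝ)) :=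
  {p | ∀ i, (i ∈ I → p.2 i = 0) ∧
    (i ∉ I → (0 < p.1 i ∧ p.2 i = 0) ∨ (p.1 i = 0 ∧ p.2 i ≤ 0))}

/-- The rectilinear skeleton `Λ_ℐ = ⋃_{I ∈ ℐ} Λ_I`. -/
def LambdaFam {N : ℕ} (𝓘 : Set (Set (Fin N))) :
    Set ((Fin N → ℝ) × (Fin N → ℝ)) :=
  ⋃ I ∈ 𝓘, LambdaI I

/-- The relatively open face `relint(−τ_I + τ_J)` for disjoint `I, J`. -/
def faceRelInt {N : ℕ} (I J : Set (Fin N)) : Set (Fin N → ℝ) :=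
  {x | (∀ i ∈ I, x i < 0) ∧ (∀ j ∈ J, 0 < x j) ∧
    ∀ l, l ∉ I → l ∉ J → x l = 0}

/-
Over a point `x` of the face, the coordinates in `I` are negative, those in `J` positive and the
rest zero, so `(x, ξ) ∈ Λ_K` forces `I ⊆ K` and says exactly that `ξ ≤ 0` vanishes on `I ∪ J ∪ K`.
Hence every `Λ_K` with `I ⊆ K ⊆ I ∪ J` has the same, largest fibre `{ξ ≤ 0, ξ = 0 on I ∪ J}`, and
any other `Λ_K` has a smaller one. The restriction of `Λ_ℐ` is full as soon as `ℐ` contains one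
`I ∪ J'`; conversely the covector equal to `-1` off `I ∪ J` lies only in the fibres of those `Λ_K`.
-/

open Set

theorem exists_nonpos_eq_zero_iff_mem {ι : Type*} (s : Set ι) :
    ∃ ξ : ι → ℝ, (∀ i, ξ i ≤ 0) ∧ ∀ i, ξ i = 0 ↔ i ∈ s := by
  classical
  refine ⟨fun i => if i ∈ s then 0 else -1, fun i => ?_, fun i => ?_⟩ <;>
    by_cases hi : i ∈ s <;> simp [hi]

section

variable {N : ℕ} {𝓘 𝓙 : Set (Set (Fin N))} {I J K K' : Set (Fin N)} {x ξ : Fin N → ℝ}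

theorem mem_LambdaFam {p : (Fin N → ℝ) × (Fin N → ℝ)} :
    p ∈ LambdaFam 𝓘 ↔ ∃ K ∈ 𝓘, p ∈ LambdaI K := by
  simp [LambdaFam]

theorem LambdaFam_mono (h : 𝓘 ⊆ 𝓙) :
    LambdaFam 𝓘 ⊆ LambdaFam 𝓙 :=
  biUnion_subset_biUnion_left h

theorem faceRelInt_nonempty (hIJ : Disjoint I J) : (faceRelInt I J).Nonempty := by
  classical
  refine ⟨fun i => if i ∈ I then -1 else if i ∈ J then 1 else 0, ?_, ?_, ?_⟩
  · intro i hi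
    simp [hi]
  · intro j hj
    simp [hj, disjoint_right.mp hIJ hj]
  · intro l hlI hlJ
    simp [hlI, hlJ]

theorem mem_LambdaI_iff_of_mem_faceRelInt (hx : x ∈ faceRelInt I J) :
    (x, ξ) ∈ LambdaI K ↔ I ⊆ K ∧ (∀ i ∈ I ∪ J ∪ K, ξ i = 0) ∧ ∀ i, ξ i ≤ 0 := by
  obtain ⟨hxI, hxJ, hxO⟩ := hx
  constructor
  · intro h
    have hIK : I ⊆ K := fun i hi => by
      by_contra hiK
      rcases (h i).2 hiK with ⟨hpos, -⟩ | ⟨hzero, -⟩ <;> linarith [hxI i hi]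
    have hzero : ∀ i ∈ I ∪ J ∪ K, ξ i = 0 := by
      rintro i ((hi | hi) | hi)
      · exact (h i).1 (hIK hi)
      · by_cases hiK : i ∈ K
        · exact (h i).1 hiK
        · rcases (h i).2 hiK with ⟨-, hξ⟩ | ⟨hzero, -⟩
          · exact hξ
          · linarith [hxJ i hi]
      · exact (h i).1 hi
    refine ⟨hIK, hzero, fun i => ?_⟩
    by_cases hiK : i ∈ K
    · exact (hzero i (Or.inr hiK)).le
    · rcases (h i).2 hiK with ⟨-, hξ⟩ | ⟨-, hξ⟩
      · exact hξ.le
      · exact hξ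
  · rintro ⟨hIK, hzero, hle⟩ i
    refine ⟨fun hi => hzero i (Or.inr hi), fun hiK => ?_⟩
    by_cases hiJ : i ∈ J
    · exact Or.inl ⟨hxJ i hiJ, hzero i (Or.inl (Or.inr hiJ))⟩
    · exact Or.inr ⟨hxO i (fun hi => hiK (hIK hi)) hiJ, hle i⟩

theorem mem_LambdaI_of_mem_faceRelInt_of_mem_LambdaI (hx : x ∈ faceRelInt I J)
    (hK : (x, ξ) ∈ LambdaI K) (hIK' : I ⊆ K') (hK'IJ : K' ⊆ I ∪ J) : (x, ξ) ∈ LambdaI K' := by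
  rw [mem_LambdaI_iff_of_mem_faceRelInt hx] at hK ⊢
  obtain ⟨-, hzero, hle⟩ := hK
  refine ⟨hIK', fun i hi => hzero i ?_, hle⟩
  rcases hi with hi | hi
  · exact Or.inl hi
  · exact Or.inl (hK'IJ hi)

theorem exists_eq_union_of_mem_LambdaI_of_mem_faceRelInt (hx : x ∈ faceRelInt I J)
    (hξ : ∀ i, ξ i = 0 ↔ i ∈ I ∪ J) (hK : (x, ξ) ∈ LambdaI K) : ∃ J' ⊆ J, K = I ∪ J' := by
  obtain ⟨hIK, hzero, -⟩ := (mem_LambdaI_iff_of_mem_faceRelInt hx).1 hK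
  have hKIJ : K ⊆ I ∪ J := fun k hk => (hξ k).1 (hzero k (Or.inr hk))
  refine ⟨K ∩ J, inter_subset_right, Subset.antisymm (fun k hk => ?_) ?_⟩
  · rcases hKIJ hk with hkI | hkJ
    exacts [Or.inl hkI, Or.inr ⟨hk, hkJ⟩]
  · exact union_subset hIK inter_subset_left

theorem LambdaFam_inter_eq_full_iff (hIJ : Disjoint I J) :
    LambdaFam 𝓘 ∩ (faceRelInt I J ×ˢ univ) = LambdaFam univ ∩ (faceRelInt I J ×ˢ univ) ↔
      ∃ J' ⊆ J, I ∪ J' ∈ 𝓘 := by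
  constructor
  · intro h
    obtain ⟨x, hx⟩ := faceRelInt_nonempty hIJ
    obtain ⟨ξ, hle, hξ⟩ := exists_nonpos_eq_zero_iff_mem (I ∪ J)
    have hxξ : (x, ξ) ∈ LambdaI I := by
      rw [mem_LambdaI_iff_of_mem_faceRelInt hx, union_right_comm, union_self]
      exact ⟨subset_rfl, fun i hi => (hξ i).2 hi, hle⟩
    have hfull : (x, ξ) ∈ LambdaFam univ ∩ (faceRelInt I J ×ˢ univ) :=
      ⟨mem_LambdaFam.2 ⟨I, mem_univ _, hxξ⟩, hx, mem_univ _⟩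
    rw [← h] at hfull
    obtain ⟨K, hK𝓘, hK⟩ := mem_LambdaFam.1 hfull.1
    obtain ⟨J', hJ', rfl⟩ := exists_eq_union_of_mem_LambdaI_of_mem_faceRelInt hx hξ hK
    exact ⟨J', hJ', hK𝓘⟩
  · rintro ⟨J', hJ', hmem⟩
    refine (inter_subset_inter_left _ (LambdaFam_mono (subset_univ 𝓘))).antisymm ?_
    rintro ⟨x, ξ⟩ ⟨hfull, hx, -⟩
    obtain ⟨K, -, hK⟩ := mem_LambdaFam.1 hfull
    refine ⟨mem_LambdaFam.2 ⟨I ∪ J', hmem, ?_⟩, hx, mem_univ _⟩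
    exact mem_LambdaI_of_mem_faceRelInt_of_mem_LambdaI hx hK subset_union_left
      (union_subset_union_right I hJ')

end

theorem leak_criterion
    {N : ℕ} (𝓘 : Set (Set (Fin N)))
    (I J : Set (Fin N)) (hIJ : Disjoint I J) :
    (LambdaFam 𝓘 ∩ (faceRelInt I J ×ˢ (Set.univ : Set (Fin N → ℝ))) ≠
        LambdaFam (Set.univ : Set (Set (Fin N))) ∩
          (faceRelInt I J ×ˢ (Set.univ : Set (Fin N → ℝ)))) ↔
      ∀ J' ⊆ J, I ∪ J' ∉ 𝓘 := by
  rw [Ne, LambdaFam_inter_eq_full_iff hIJ]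
  push Not
  rfl
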